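/- arXiv:2308.09625 — 2 statements merged into one kernel-verified Lean document; each statement's English description precedes it below -/
import Mathlib

section
/- Let G be a d-weighted reachability game and let ≲ be either the componentwise order ≤_C or the lexicographic order ≤_L on (ℕ ∪ {∞})^d. For every vertex v and every ℓ ≥ |V|, I^ℓ(v) = I^{|V|}(v); that is, the fixpoint algorithm computing the sets Iᵏ reaches its fixpoint within at most |V| iterations (and hence terminates in at most |V| + 1 iterations). -/
open Classical

/-- Cost profiles: `d`-tuples over `ℕ ∪ {∞}`. -/
abbrev CostP (d : ℕ) := Fin d → ℕ∞

/-- The componentwise order `≤_C` on `(ℕ ∪ {∞})^d`. -/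
def leC {d : ℕ} (x y : CostP d) : Prop := x ≤ y

/-- The strict lexicographic order `<_L` on `(ℕ ∪ {∞})^d`. -/
def ltL {d : ℕ} (x y : CostP d) : Prop :=
  ∃ i, (∀ j, j < i → x j = y j) ∧ x i < y i

/-- The lexicographic order `≤_L` on `(ℕ ∪ {∞})^d`. -/
def leL {d : ℕ} (x y : CostP d) : Prop := x = y ∨ ltL x y

/-- Minimal elements of `X` with respect to an order `le`. -/
def minimalSet {α : Type*} (le : α → α → Prop) (X : Set α) : Set α :=
  { x | x ∈ X ∧ ∀ y ∈ X, le y x → y = x }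

/-- Upward closure of `X` with respect to an order `le`. -/
def upSet {α : Type*} (le : α → α → Prop) (X : Set α) : Set α :=
  { z | ∃ x ∈ X, le x z }

/-- Translation of a set of cost profiles by (the cast of) a tuple `c ∈ ℕ^d`. -/
def addW {d : ℕ} (X : Set (CostP d)) (c : Fin d → ℕ) : Set (CostP d) :=
  { z | ∃ x ∈ X, z = x + fun i => (c i : ℕ∞) }

/-- A `d`-weighted reachability game: a finite directed graph whose vertices are
partitioned into Player 1's vertices `V1` and Player 2's vertices (the complement),
an edge relation `E` such that every vertex has a successor, a `d`-dimensional
weight function `w` on edges, and a target set `F`. -/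
structure MWGame (V : Type*) (d : ℕ) where
  V1 : Set V
  E : V → V → Prop
  succ_nonempty : ∀ v, ∃ v', E v v'
  w : V → V → Fin d → ℕ
  F : Set V

namespace MWGame

variable {V : Type*} {d : ℕ}

/-- Strategies of Player 1: a choice of successor for every history
(represented as the pair (strict past, current vertex)), valid at Player 1's vertices. -/
def Strat1 (G : MWGame V d) :=
  { σ : List V → V → V // ∀ h u, u ∈ G.V1 → G.E u (σ h u) }

/-- Strategies of Player 2. -/
def Strat2 (G : MWGame V d) :=
  { σ : List V → V → V // ∀ h u, u ∉ G.V1 → G.E u (σ h u) }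

/-- The pair (strict past, current vertex) after `n` steps of the play consistent
with `σ₁` and `σ₂` from `v`. -/
noncomputable def outAux (G : MWGame V d) (σ₁ : G.Strat1) (σ₂ : G.Strat2) (v : V) :
    ℕ → List V × V
  | 0 => ([], v)
  | n + 1 =>
    let q := G.outAux σ₁ σ₂ v n
    (q.1 ++ [q.2], if q.2 ∈ G.V1 then σ₁.1 q.1 q.2 else σ₂.1 q.1 q.2)

/-- `Out(σ₁,σ₂,v)`: the unique play from `v` consistent with `σ₁` and `σ₂`. -/
noncomputable def out (G : MWGame V d) (σ₁ : G.Strat1) (σ₂ : G.Strat2) (v : V) (n : ℕ) : V :=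
  (G.outAux σ₁ σ₂ v n).2

/-- The cost profile of a play: the componentwise sum of weights up to the first
visit of the target set, and `(∞,…,∞)` if the target set is never visited. -/
noncomputable def cost (G : MWGame V d) (ρ : ℕ → V) : CostP d :=
  if h : ∃ ℓ, ρ ℓ ∈ G.F then
    fun i => ∑ n ∈ Finset.range (Nat.find h), (G.w (ρ n) (ρ (n + 1)) i : ℕ∞)
  else ⊤

/-- `Ensure^k(v)`: cost profiles that Player 1 can ensure from `v` within `k` steps. -/
def EnsureK (G : MWGame V d) (le : CostP d → CostP d → Prop) (k : ℕ) (v : V) :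
    Set (CostP d) :=
  { x | ∃ σ₁ : G.Strat1, ∀ σ₂ : G.Strat2,
      le (G.cost (G.out σ₁ σ₂ v)) x ∧
      ∀ h : (∃ ℓ, G.out σ₁ σ₂ v ℓ ∈ G.F), Nat.find h ≤ k }

/-- `Ensure(v)`: cost profiles that Player 1 can ensure from `v`. -/
def Ensure (G : MWGame V d) (le : CostP d → CostP d → Prop) (v : V) : Set (CostP d) :=
  { x | ∃ σ₁ : G.Strat1, ∀ σ₂ : G.Strat2, le (G.cost (G.out σ₁ σ₂ v)) x }

/-- The sets `Iᵏ(v)` computed by the fixpoint algorithm, relative to the order `le`. -/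
noncomputable def Iset (G : MWGame V d) (le : CostP d → CostP d → Prop) :
    ℕ → V → Set (CostP d)
  | 0, v => if v ∈ G.F then {0} else {⊤}
  | k + 1, v =>
    if v ∈ G.F then {0}
    else if v ∈ G.V1 then
      minimalSet le (⋃ v' ∈ { u | G.E v u }, addW (upSet le (G.Iset le k v')) (G.w v v'))
    else
      minimalSet le (⋂ v' ∈ { u | G.E v u }, addW (upSet le (G.Iset le k v')) (G.w v v'))

end MWGame

/-!
Write `Uᵏ(v)` for the upward closure of `Iᵏ(v)`. Both orders are refined by the well-founded
lexicographic order, so every element of a set dominates a minimal one; hence taking minimal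
elements does not change upward closures, `Iᵏ⁺¹` depends only on the sets `Uᵏ(v')`, and these
grow with `k`. A profile `b` that enters `Uᴿ(v)` at stage `R` comes from a profile `b' ≤ b` that
entered `Uᴿ⁻¹(v')` at stage `R - 1` for a successor `v'`. Iterating yields vertices
`v = v₀, …, v_R`, pairwise distinct because the profiles decrease along the chain while `Uᵏ` is
upward closed and monotone in `k`. So `R < |V|`: the sets `Uᵏ` are stationary from `|V| - 1` on,
and the sets `Iᵏ` from `|V|` on.
-/

section CostOrder

variable {d : ℕ}

theorem leL_iff_toLex_le {x y : CostP d} : leL x y ↔ toLex x ≤ toLex y := by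
  rw [le_iff_eq_or_lt, toLex_inj]
  rfl

/-- `toLex_le` makes the strict part of `le` well-founded, so minimal elements exist. -/
structure IsAdmissibleOrder (le : CostP d → CostP d → Prop) : Prop where
  of_le : ∀ {x y : CostP d}, x ≤ y → le x y
  trans : ∀ {x y z : CostP d}, le x y → le y z → le x z
  toLex_le : ∀ {x y : CostP d}, le x y → toLex x ≤ toLex y

theorem isAdmissibleOrder_leC : IsAdmissibleOrder (@leC d) :=
  ⟨id, le_trans, fun h => Pi.toLex_monotone h⟩

theorem isAdmissibleOrder_leL : IsAdmissibleOrder (@leL d) where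
  of_le h := leL_iff_toLex_le.2 (Pi.toLex_monotone h)
  trans h₁ h₂ := leL_iff_toLex_le.2 ((leL_iff_toLex_le.1 h₁).trans (leL_iff_toLex_le.1 h₂))
  toLex_le h := leL_iff_toLex_le.1 h

variable {le : CostP d → CostP d → Prop}

theorem IsAdmissibleOrder.exists_minimal_le (hle : IsAdmissibleOrder le) {A : Set (CostP d)}
    {a : CostP d} (ha : a ∈ A) : ∃ m ∈ minimalSet le A, le m a := by
  obtain ⟨m, ⟨hmA, hma⟩, hmin⟩ := (InvImage.wf toLex wellFounded_lt).has_min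
    {x | x ∈ A ∧ le x a} ⟨a, ha, hle.of_le le_rfl⟩
  refine ⟨m, ⟨hmA, fun y hyA hym => ?_⟩, hma⟩
  exact toLex_inj.1 <| le_antisymm (hle.toLex_le hym)
    (not_lt.1 (hmin y ⟨hyA, hle.trans hym hma⟩))

theorem IsAdmissibleOrder.upSet_minimalSet (hle : IsAdmissibleOrder le) (A : Set (CostP d)) :
    upSet le (minimalSet le A) = upSet le A := by
  refine Set.Subset.antisymm (fun b ⟨x, hx, hxb⟩ => ⟨x, hx.1, hxb⟩) fun b ⟨x, hx, hxb⟩ => ?_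
  obtain ⟨m, hm, hmx⟩ := hle.exists_minimal_le hx
  exact ⟨m, hm, hle.trans hmx hxb⟩

end CostOrder

namespace MWGame

variable {V : Type*} {d : ℕ} (G : MWGame V d) {le : CostP d → CostP d → Prop}

def upIset (le : CostP d → CostP d → Prop) (k : ℕ) (v : V) : Set (CostP d) :=
  upSet le (G.Iset le k v)

variable {G}

theorem upIset_of_le (hle : IsAdmissibleOrder le) {k : ℕ} {v : V} {x y : CostP d}
    (hx : x ∈ G.upIset le k v) (hxy : le x y) : y ∈ G.upIset le k v :=
  let ⟨m, hm, hmx⟩ := hx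
  ⟨m, hm, hle.trans hmx hxy⟩

theorem Iset_of_mem_F {v : V} (hF : v ∈ G.F) (k : ℕ) : G.Iset le k v = {0} := by
  cases k <;> simp [Iset, hF]

theorem mem_upIset_succ_of_mem_V1 (hle : IsAdmissibleOrder le) {v : V} (hF : v ∉ G.F)
    (h1 : v ∈ G.V1) {k : ℕ} {b : CostP d} :
    b ∈ G.upIset le (k + 1) v ↔
      ∃ v', G.E v v' ∧ ∃ y ∈ G.upIset le k v', le (y + fun i => (G.w v v' i : ℕ∞)) b := by
  rw [upIset, Iset, if_neg hF, if_pos h1, hle.upSet_minimalSet]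
  simp only [upSet, addW, Set.mem_iUnion, Set.mem_ofPred_eq]
  constructor
  · rintro ⟨_, ⟨v', hE, y, hy, rfl⟩, hb⟩
    exact ⟨v', hE, y, hy, hb⟩
  · rintro ⟨v', hE, y, hy, hb⟩
    exact ⟨_, ⟨v', hE, y, hy, rfl⟩, hb⟩

theorem mem_upIset_succ_of_notMem_V1 (hle : IsAdmissibleOrder le) {v : V} (hF : v ∉ G.F)
    (h1 : v ∉ G.V1) {k : ℕ} {b : CostP d} :
    b ∈ G.upIset le (k + 1) v ↔
      ∃ z, le z b ∧
        ∀ v', G.E v v' → ∃ y ∈ G.upIset le k v', z = y + fun i => (G.w v v' i : ℕ∞) := by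
  rw [upIset, Iset, if_neg hF, if_neg h1, hle.upSet_minimalSet]
  simp only [upSet, addW, Set.mem_iInter, Set.mem_ofPred_eq]
  exact ⟨fun ⟨z, hz, hb⟩ => ⟨z, hb, hz⟩, fun ⟨z, hb, hz⟩ => ⟨z, hz, hb⟩⟩

theorem top_mem_upIset (hle : IsAdmissibleOrder le) (k : ℕ) (v : V) :
    (⊤ : CostP d) ∈ G.upIset le k v := by
  have top_add (c : Fin d → ℕ) : (⊤ + fun i => (c i : ℕ∞)) = ⊤ := by
    funext i; exact top_add _
  induction k generalizing v with
  | zero =>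
    by_cases hF : v ∈ G.F
    · exact ⟨0, by rw [Iset_of_mem_F hF]; rfl, hle.of_le le_top⟩
    · exact ⟨⊤, by simp [Iset, hF], hle.of_le le_rfl⟩
  | succ k ih =>
    by_cases hF : v ∈ G.F
    · exact ⟨0, by rw [Iset_of_mem_F hF]; rfl, hle.of_le le_top⟩
    by_cases h1 : v ∈ G.V1
    · obtain ⟨v', hE⟩ := G.succ_nonempty v
      exact (mem_upIset_succ_of_mem_V1 hle hF h1).2
        ⟨v', hE, ⊤, ih v', by rw [top_add]; exact hle.of_le le_rfl⟩
    · exact (mem_upIset_succ_of_notMem_V1 hle hF h1).2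
        ⟨⊤, hle.of_le le_rfl, fun v' _ => ⟨⊤, ih v', (top_add _).symm⟩⟩

theorem upIset_subset_upIset_succ (hle : IsAdmissibleOrder le) (k : ℕ) (v : V) :
    G.upIset le k v ⊆ G.upIset le (k + 1) v := by
  induction k generalizing v with
  | zero =>
    intro b hb
    by_cases hF : v ∈ G.F
    · simpa only [upIset, Iset_of_mem_F hF] using hb
    obtain ⟨_, rfl, hb⟩ : ∃ m, m = ⊤ ∧ le m b := by simpa [upIset, upSet, Iset, hF] using hb
    exact upIset_of_le hle (top_mem_upIset hle 1 v) hb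
  | succ k ih =>
    intro b hb
    by_cases hF : v ∈ G.F
    · simpa only [upIset, Iset_of_mem_F hF] using hb
    by_cases h1 : v ∈ G.V1
    · obtain ⟨v', hE, y, hy, hyb⟩ := (mem_upIset_succ_of_mem_V1 hle hF h1).1 hb
      exact (mem_upIset_succ_of_mem_V1 hle hF h1).2 ⟨v', hE, y, ih v' hy, hyb⟩
    · obtain ⟨z, hzb, hz⟩ := (mem_upIset_succ_of_notMem_V1 hle hF h1).1 hb
      refine (mem_upIset_succ_of_notMem_V1 hle hF h1).2 ⟨z, hzb, fun v' hE => ?_⟩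
      obtain ⟨y, hy, rfl⟩ := hz v' hE
      exact ⟨y, ih v' hy, rfl⟩

theorem upIset_mono (hle : IsAdmissibleOrder le) (v : V) :
    Monotone fun k => G.upIset le k v :=
  monotone_nat_of_le_succ fun k => upIset_subset_upIset_succ hle k v

theorem Iset_succ_congr {k j : ℕ} (h : ∀ v, G.upIset le k v = G.upIset le j v) (v : V) :
    G.Iset le (k + 1) v = G.Iset le (j + 1) v := by
  simp only [upIset] at h
  simp only [Iset, h]

theorem exists_succ_newly_mem_upIset (hle : IsAdmissibleOrder le) {R : ℕ} {v : V}
    {b : CostP d} (hb : b ∈ G.upIset le (R + 1) v) (hnb : b ∉ G.upIset le R v) :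
    ∃ v' b', G.E v v' ∧ le b' b ∧ b' ∈ G.upIset le R v' ∧ ∀ j < R, b' ∉ G.upIset le j v' := by
  have le_add (y : CostP d) (c : Fin d → ℕ) : le y (y + fun i => (c i : ℕ∞)) :=
    hle.of_le fun _ => le_self_add
  have hF : v ∉ G.F := fun hF => hnb (by simpa only [upIset, Iset_of_mem_F hF] using hb)
  by_cases h1 : v ∈ G.V1
  · obtain ⟨v', hE, y, hy, hyb⟩ := (mem_upIset_succ_of_mem_V1 hle hF h1).1 hb
    refine ⟨v', y, hE, hle.trans (le_add y _) hyb, hy, fun j hj hyj => hnb ?_⟩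
    exact upIset_mono hle v hj ((mem_upIset_succ_of_mem_V1 hle hF h1).2 ⟨v', hE, y, hyj, hyb⟩)
  obtain ⟨z, hzb, hz⟩ := (mem_upIset_succ_of_notMem_V1 hle hF h1).1 hb
  cases R with
  | zero =>
    obtain ⟨v', hE⟩ := G.succ_nonempty v
    obtain ⟨y, hy, rfl⟩ := hz v' hE
    exact ⟨v', y, hE, hle.trans (le_add y _) hzb, hy, fun j hj => absurd hj j.not_lt_zero⟩
  | succ R =>
    obtain ⟨v', hE, hv'⟩ : ∃ v', G.E v v' ∧
        ∀ y ∈ G.upIset le R v', z ≠ y + fun i => (G.w v v' i : ℕ∞) := by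
      by_contra! h
      exact hnb ((mem_upIset_succ_of_notMem_V1 hle hF h1).2 ⟨z, hzb, h⟩)
    obtain ⟨y, hy, rfl⟩ := hz v' hE
    refine ⟨v', y, hE, hle.trans (le_add y _) hzb, hy, fun j hj hyj => ?_⟩
    exact hv' y (upIset_mono hle v' (Nat.le_of_lt_succ hj) hyj) rfl

variable [Fintype V]

theorem add_card_lt_card_of_newly_mem_upIset (hle : IsAdmissibleOrder le) (R : ℕ)
    (S : Finset V) (v : V) (b : CostP d) (hb : b ∈ G.upIset le R v)
    (hnew : ∀ j < R, b ∉ G.upIset le j v) (hS : ∀ u ∈ S, b ∉ G.upIset le R u) :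
    R + S.card < Fintype.card V := by
  have hvS : v ∉ S := fun hv => hS v hv hb
  induction R generalizing S v b with
  | zero =>
    have := Finset.card_le_univ (insert v S)
    rw [Finset.card_insert_of_notMem hvS] at this
    omega
  | succ R ih =>
    obtain ⟨v', b', hE, hb'b, hb', hnew'⟩ :=
      exists_succ_newly_mem_upIset hle hb (hnew R R.lt_succ_self)
    have hS' : ∀ u ∈ insert v S, b' ∉ G.upIset le R u := by
      intro u hu hb'u
      rcases Finset.mem_insert.1 hu with rfl | hu
      · exact hnew R R.lt_succ_self (upIset_of_le hle hb'u hb'b)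
      · exact hS u hu (upIset_of_le hle (upIset_subset_upIset_succ hle R u hb'u) hb'b)
    have := ih (insert v S) v' b' hb' hnew' hS' fun hv => hS' v' hv hb'
    rw [Finset.card_insert_of_notMem hvS] at this
    omega

theorem upIset_eq_of_card_sub_one_le (hle : IsAdmissibleOrder le) {k : ℕ}
    (hk : Fintype.card V - 1 ≤ k) (v : V) :
    G.upIset le k v = G.upIset le (Fintype.card V - 1) v := by
  refine Set.Subset.antisymm (fun b hb => ?_) (upIset_mono hle v hk)
  have hex : ∃ R, b ∈ G.upIset le R v := ⟨k, hb⟩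
  have hR := add_card_lt_card_of_newly_mem_upIset hle _ ∅ v b (Nat.find_spec hex)
    (fun _ => Nat.find_min hex) (by simp)
  rw [Finset.card_empty, add_zero] at hR
  exact upIset_mono hle v (by omega) (Nat.find_spec hex)

end MWGame

theorem stmt3_general {V : Type*} [Fintype V] {d : ℕ} (G : MWGame V d)
    (le : CostP d → CostP d → Prop) (hle : le = leC ∨ le = leL) :
    ∀ (v : V) (l : ℕ), Fintype.card V ≤ l →
      G.Iset le l v = G.Iset le (Fintype.card V) v := by
  have hadm : IsAdmissibleOrder le := by
    rcases hle with rfl | rfl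
    exacts [isAdmissibleOrder_leC, isAdmissibleOrder_leL]
  intro v l hl
  have hV : 0 < Fintype.card V := Fintype.card_pos_iff.2 ⟨v⟩
  obtain ⟨m, rfl⟩ : ∃ m, l = m + 1 := ⟨l - 1, by omega⟩
  rw [show Fintype.card V = Fintype.card V - 1 + 1 by omega]
  exact MWGame.Iset_succ_congr
    (fun u => MWGame.upIset_eq_of_card_sub_one_le hadm (by omega) u) v

/-- The fixpoint algorithm reaches its fixpoint within at most `|V|`
iterations: `I^l(v) = I^{|V|}(v)` for every `l ≥ |V|`. -/
theorem stmt3 {V : Type*} [Fintype V] {d : ℕ} (hd : 1 ≤ d) (G : MWGame V d)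
    (le : CostP d → CostP d → Prop) (hle : le = leC ∨ le = leL) :
    ∀ (v : V) (l : ℕ), Fintype.card V ≤ l →
      G.Iset le l v = G.Iset le (Fintype.card V) v :=
  stmt3_general G le hle
end

section
/- There exist a 2-weighted reachability game G, a vertex v₀ of G and a cost profile x ∈ ℕ² such that some strategy of Player 1 from v₀ ensures x with respect to the componentwise order ≤_C (i.e., Cost(Out(σ₁,σ₂,v₀)) ≤_C x for every strategy σ₂ of Player 2), but no positional strategy of Player 1 from v₀ ensures x, where a strategy σ₁ is positional if σ₁(hv) = σ₁(h'v) whenever the histories hv and h'v end in the same vertex v. Hence memory may be required for Pareto-optimal strategies under the componentwise order. -/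
open Classical

/-!
Player 2 first picks one of two branches `va` (weights `(1,0)`) and `vb` (weights `(0,1)`);
both lead to `vc`, where Player 1 picks one of the targets `vf` (weights `(0,1)`) and `vg`
(weights `(1,0)`). The cost is `(1,1)` exactly when Player 1 compensates Player 2's choice,
which a strategy remembering the branch can do. A positional strategy makes the same choice
at `vc` whatever the branch, so Player 2 takes the branch that makes one component `2`.
-/

namespace MWGame

variable {V : Type*} {d : ℕ} (G : MWGame V d)

theorem outAux_fst (σ₁ : G.Strat1) (σ₂ : G.Strat2) (v : V) (n : ℕ) :
    (G.outAux σ₁ σ₂ v n).1 = (List.range n).map (G.out σ₁ σ₂ v) := by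
  induction n with
  | zero => rfl
  | succ n ih => rw [outAux, List.range_succ, List.map_append, ← ih]; rfl

@[simp]
theorem out_zero (σ₁ : G.Strat1) (σ₂ : G.Strat2) (v : V) : G.out σ₁ σ₂ v 0 = v := rfl

theorem out_succ (σ₁ : G.Strat1) (σ₂ : G.Strat2) (v : V) (n : ℕ) :
    G.out σ₁ σ₂ v (n + 1) =
      if G.out σ₁ σ₂ v n ∈ G.V1 then
        σ₁.1 ((List.range n).map (G.out σ₁ σ₂ v)) (G.out σ₁ σ₂ v n)
      else σ₂.1 ((List.range n).map (G.out σ₁ σ₂ v)) (G.out σ₁ σ₂ v n) := by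
  rw [← outAux_fst]; rfl

theorem cost_eq_sum_of_first_visit {ρ : ℕ → V} {ℓ : ℕ} (hℓ : ρ ℓ ∈ G.F)
    (hbefore : ∀ n < ℓ, ρ n ∉ G.F) :
    G.cost ρ = fun i => ∑ n ∈ Finset.range ℓ, (G.w (ρ n) (ρ (n + 1)) i : ℕ∞) := by
  have hvisit : ∃ ℓ, ρ ℓ ∈ G.F := ⟨ℓ, hℓ⟩
  rw [cost, dif_pos hvisit, (Nat.find_eq_iff hvisit).2 ⟨hℓ, hbefore⟩]

end MWGame

namespace MemoryExample

inductive Vtx : Type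
  | v0 | va | vb | vc | vf | vg
  deriving DecidableEq

open Vtx

instance : Fintype Vtx :=
  Fintype.ofList [v0, va, vb, vc, vf, vg] (by intro x; cases x <;> simp)

def edge : Vtx → Vtx → Bool
  | v0, va | v0, vb | va, vc | vb, vc | vc, vf | vc, vg | vf, vf | vg, vg => true
  | _, _ => false

def next : Vtx → Vtx
  | v0 => va
  | va => vc
  | vb => vc
  | vc => vf
  | vf => vf
  | vg => vg

theorem edge_next : ∀ u, edge u (next u) = true := by decide

theorem eq_of_edge_v0 : ∀ t, edge v0 t = true → t = va ∨ t = vb := by decide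

theorem eq_of_edge_branch : ∀ s t, s = va ∨ s = vb → edge s t = true → t = vc := by decide

theorem eq_of_edge_vc : ∀ t, edge vc t = true → t = vf ∨ t = vg := by decide

def weight : Vtx → Vtx → Fin 2 → ℕ
  | v0, va => ![1, 0]
  | v0, vb => ![0, 1]
  | vc, vf => ![0, 1]
  | vc, vg => ![1, 0]
  | _, _ => 0

def game : MWGame Vtx 2 where
  V1 := {v | v ≠ v0}
  E u v := edge u v = true
  succ_nonempty u := ⟨next u, edge_next u⟩
  w := weight
  F := {vf, vg}

@[simp]
theorem mem_V1 {u : Vtx} : u ∈ game.V1 ↔ u ≠ v0 := Iff.rfl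

@[simp]
theorem game_w : game.w = weight := rfl

@[simp]
theorem mem_F {u : Vtx} : u ∈ game.F ↔ u = vf ∨ u = vg := Iff.rfl

theorem choice_v0 (σ₂ : game.Strat2) (h : List Vtx) : σ₂.1 h v0 = va ∨ σ₂.1 h v0 = vb :=
  eq_of_edge_v0 _ (σ₂.2 h v0 fun hv0 => hv0 rfl)

theorem choice_vc (σ₁ : game.Strat1) (h : List Vtx) : σ₁.1 h vc = vf ∨ σ₁.1 h vc = vg :=
  eq_of_edge_vc _ (σ₁.2 h vc nofun)

def pathCost (s t : Vtx) : CostP 2 := fun i => (weight v0 s i + weight s vc i + weight vc t i : ℕ)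

theorem cost_out (σ₁ : game.Strat1) (σ₂ : game.Strat2) :
    game.cost (game.out σ₁ σ₂ v0) = pathCost (σ₂.1 [] v0) (σ₁.1 [v0, σ₂.1 [] v0] vc) := by
  have hs : σ₂.1 [] v0 = va ∨ σ₂.1 [] v0 = vb := choice_v0 σ₂ []
  generalize hs_eq : σ₂.1 [] v0 = s at hs
  have ht := choice_vc σ₁ [v0, s]
  generalize ht_eq : σ₁.1 [v0, s] vc = t at ht
  have h1 : game.out σ₁ σ₂ v0 1 = s := by
    rw [game.out_succ]; simp [hs_eq]
  have hs0 : s ≠ v0 := by rcases hs with rfl | rfl <;> decide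
  have h2 : game.out σ₁ σ₂ v0 2 = vc := by
    rw [game.out_succ, h1, if_pos (mem_V1.2 hs0)]
    exact eq_of_edge_branch s _ hs (σ₁.2 _ s hs0)
  have h3 : game.out σ₁ σ₂ v0 3 = t := by
    rw [game.out_succ, h2]
    simp [List.range_succ, h1, ht_eq]
  rw [game.cost_eq_sum_of_first_visit (ℓ := 3) (by simpa [h3] using ht)]
  · funext i
    simp [Finset.sum_range_succ, h1, h2, h3, pathCost]
  · intro n hn
    interval_cases n <;> simp [h1, h2]
    rcases hs with rfl | rfl <;> decide

theorem pathCost_le_one_iff {s t : Vtx} (hs : s = va ∨ s = vb) (ht : t = vf ∨ t = vg) :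
    leC (pathCost s t) (fun _ => ((1 : ℕ) : ℕ∞)) ↔ (s = va ↔ t = vf) := by
  rcases hs with rfl | rfl <;> rcases ht with rfl | rfl <;>
    simp [leC, pathCost, weight, Pi.le_def, Fin.forall_fin_two, one_add_one_eq_two]

def memoryStrat : game.Strat1 :=
  ⟨fun h u => if u = vc then (if va ∈ h then vf else vg) else next u, fun h u _ => by
    by_cases hu : u = vc
    · subst hu
      simp only [if_true]
      split_ifs <;> rfl
    · simp only [if_neg hu]
      exact edge_next u⟩

def branchStrat (s : Vtx) (hs : edge v0 s = true) : game.Strat2 :=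
  ⟨fun _ _ => s, fun _ u hu => by
    obtain rfl : u = v0 := not_not.mp hu
    exact hs⟩

@[simp]
theorem branchStrat_apply {s : Vtx} (hs : edge v0 s = true) (h : List Vtx) (u : Vtx) :
    (branchStrat s hs).1 h u = s := rfl

end MemoryExample

open MemoryExample MemoryExample.Vtx

/-- Memory may be required under the componentwise order: there are a
2-weighted reachability game, an initial vertex `v₀` and a cost profile `x ∈ ℕ²` such
that some strategy of Player 1 ensures `x` w.r.t. `≤_C`, but no positional strategy of
Player 1 ensures `x`. -/
theorem stmt16 :
    ∃ (V : Type) (_ : Fintype V) (G : MWGame V 2) (v₀ : V) (x : Fin 2 → ℕ),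
      (∃ σ₁ : G.Strat1, ∀ σ₂ : G.Strat2,
        leC (G.cost (G.out σ₁ σ₂ v₀)) (fun i => (x i : ℕ∞))) ∧
      ∀ σ₁ : G.Strat1, (∀ h h' z, σ₁.1 h z = σ₁.1 h' z) →
        ∃ σ₂ : G.Strat2, ¬ leC (G.cost (G.out σ₁ σ₂ v₀)) (fun i => (x i : ℕ∞)) := by
  refine ⟨Vtx, inferInstance, game, v0, fun _ => 1, ⟨memoryStrat, fun σ₂ => ?_⟩, fun σ₁ hpos => ?_⟩
  · rw [cost_out, pathCost_le_one_iff (choice_v0 σ₂ []) (choice_vc memoryStrat _)]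
    rcases choice_v0 σ₂ [] with h | h <;> simp [memoryStrat, h]
  · rcases choice_vc σ₁ [] with ht | ht
    · refine ⟨branchStrat vb (by decide), ?_⟩
      rw [cost_out, branchStrat_apply, hpos _ [] vc, ht,
        pathCost_le_one_iff (.inr rfl) (.inl rfl)]
      decide
    · refine ⟨branchStrat va (by decide), ?_⟩
      rw [cost_out, branchStrat_apply, hpos _ [] vc, ht,
        pathCost_le_one_iff (.inl rfl) (.inr rfl)]
      decide
end
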